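/- With C = Diag(cos(kπ/n), k = 0,…,n−1) and S = Diag(sin(kπ/n), k = 0,…,n−1), the identity C·F̌²·S + S·F̌²·C = 0 holds. -/

import Mathlib

open Matrix Real

/-- The node-centered cosine matrix `(Ȟ_c)_{j,k} = n^{−1/2}·cos(2jkπ/n)`. -/
noncomputable def Hc (n : ℕ) : Matrix (Fin n) (Fin n) ℝ :=
  fun j k => Real.cos (2 * (j.val : ℝ) * (k.val : ℝ) * Real.pi / n) / Real.sqrt n

/-- The node-centered sine matrix `(Ȟ_s)_{j,k} = n^{−1/2}·sin(2jkπ/n)`. -/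
noncomputable def Hs (n : ℕ) : Matrix (Fin n) (Fin n) ℝ :=
  fun j k => Real.sin (2 * (j.val : ℝ) * (k.val : ℝ) * Real.pi / n) / Real.sqrt n

/-- The node-centered Fourier matrix `F̌ = Ȟ_c + i·Ȟ_s ∈ ℂ^{n×n}`. -/
noncomputable def fourierM (n : ℕ) : Matrix (Fin n) (Fin n) ℂ :=
  (Hc n).map Complex.ofReal + Complex.I • (Hs n).map Complex.ofReal

/-
The entries of `F̌` are `ζ ^ (j k) / √n` with `ζ = exp (2πi/n)` a primitive `n`-th root of unity,
so `(F̌²)_{jk} = n⁻¹ ∑_{m<n} (ζ ^ (j + k)) ^ m` vanishes unless `n ∣ j + k`. The `(j, k)` entry of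
`C F̌² S + S F̌² C` is `(F̌²)_{jk}` times `sin (jπ/n + kπ/n)`, and that sine vanishes when `n ∣ j + k`.
-/

open Complex in
lemma fourierM_apply (n : ℕ) (j k : Fin n) :
    fourierM n j k = exp (2 * π * I / n) ^ (j.val * k.val) / Real.sqrt n := by
  rw [← Complex.exp_nat_mul]
  simp only [fourierM, Matrix.add_apply, Matrix.map_apply, Matrix.smul_apply, Hc, Hs,
    smul_eq_mul]
  rw [show ((j.val * k.val : ℕ) : ℂ) * (2 * π * I / n)
      = ((2 * (j.val : ℝ) * (k.val : ℝ) * π / n : ℝ) : ℂ) * I by push_cast; ring, exp_mul_I]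
  push_cast
  ring

lemma geom_sum_eq_zero_of_pow_eq_one {K : Type*} [Field K] {x : K} {n : ℕ} (hx : x ≠ 1)
    (hxn : x ^ n = 1) : ∑ i ∈ Finset.range n, x ^ i = 0 := by
  rw [geom_sum_eq hx, hxn, sub_self, zero_div]

lemma fourierM_sq_apply (n : ℕ) (j k : Fin n) :
    (fourierM n ^ 2) j k =
      (∑ m ∈ Finset.range n, (Complex.exp (2 * π * Complex.I / n) ^ (j.val + k.val)) ^ m) / n := by
  rw [sq, Matrix.mul_apply, Finset.sum_div, ← Fin.sum_univ_eq_sum_range]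
  refine Finset.sum_congr rfl fun m _ => ?_
  rw [fourierM_apply, fourierM_apply, div_mul_div_comm, ← pow_add, ← pow_mul,
    ← Complex.ofReal_mul, Real.mul_self_sqrt n.cast_nonneg, Complex.ofReal_natCast]
  congr 2
  ring

lemma fourierM_sq_apply_eq_zero {n : ℕ} {j k : Fin n} (h : ¬ n ∣ j.val + k.val) :
    (fourierM n ^ 2) j k = 0 := by
  have hζ := Complex.isPrimitiveRoot_exp n (Fin.pos j).ne'
  rw [fourierM_sq_apply, geom_sum_eq_zero_of_pow_eq_one ((hζ.pow_eq_one_iff_dvd _).not.mpr h),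
    zero_div]
  rw [pow_right_comm, hζ.pow_eq_one, one_pow]

lemma sin_nat_mul_pi_div_eq_zero {a n : ℕ} (h : n ∣ a) : Real.sin (a * π / n) = 0 := by
  obtain ⟨c, rfl⟩ := h
  rcases eq_or_ne n 0 with rfl | hn
  · simp
  · rw [Nat.cast_mul, mul_assoc, mul_div_cancel_left₀ _ (Nat.cast_ne_zero.mpr hn),
      Real.sin_nat_mul_pi]

lemma diagonal_cos_mul_mul_diagonal_sin_add_apply {ι : Type*} [Fintype ι] [DecidableEq ι]
    (θ : ι → ℝ) (A : Matrix ι ι ℂ) (j k : ι) :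
    (diagonal (fun i => (Real.cos (θ i) : ℂ)) * A * diagonal (fun i => (Real.sin (θ i) : ℂ)) +
        diagonal (fun i => (Real.sin (θ i) : ℂ)) * A * diagonal (fun i => (Real.cos (θ i) : ℂ)))
        j k =
      A j k * Real.sin (θ j + θ k) := by
  simp only [Matrix.add_apply, Matrix.diagonal_mul, Matrix.mul_diagonal, Real.sin_add]
  push_cast
  ring

theorem C_F2_S_plus_S_F2_C_general (n : ℕ) :
    Matrix.diagonal (fun k : Fin n => (Real.cos ((k.val : ℝ) * Real.pi / n) : ℂ)) *
        fourierM n ^ 2 *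
        Matrix.diagonal (fun k : Fin n => (Real.sin ((k.val : ℝ) * Real.pi / n) : ℂ)) +
      Matrix.diagonal (fun k : Fin n => (Real.sin ((k.val : ℝ) * Real.pi / n) : ℂ)) *
        fourierM n ^ 2 *
        Matrix.diagonal (fun k : Fin n => (Real.cos ((k.val : ℝ) * Real.pi / n) : ℂ)) =
      0 := by
  ext j k
  rw [diagonal_cos_mul_mul_diagonal_sin_add_apply (fun k : Fin n => (k.val : ℝ) * π / n),
    Matrix.zero_apply]
  by_cases h : n ∣ j.val + k.val
  · rw [← add_div, ← add_mul, ← Nat.cast_add, sin_nat_mul_pi_div_eq_zero h, Complex.ofReal_zero,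
      mul_zero]
  · rw [fourierM_sq_apply_eq_zero h, zero_mul]

/-- With `C = Diag(cos(kπ/n))` and `S = Diag(sin(kπ/n))`, we have
`C·F̌²·S + S·F̌²·C = 0`. -/
theorem C_F2_S_plus_S_F2_C (n : ℕ) (hn : 1 ≤ n) :
    Matrix.diagonal (fun k : Fin n => (Real.cos ((k.val : ℝ) * Real.pi / n) : ℂ)) *
        fourierM n ^ 2 *
        Matrix.diagonal (fun k : Fin n => (Real.sin ((k.val : ℝ) * Real.pi / n) : ℂ)) +
      Matrix.diagonal (fun k : Fin n => (Real.sin ((k.val : ℝ) * Real.pi / n) : ℂ)) *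
        fourierM n ^ 2 *
        Matrix.diagonal (fun k : Fin n => (Real.cos ((k.val : ℝ) * Real.pi / n) : ℂ)) =
      0 :=
  C_F2_S_plus_S_F2_C_general n
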